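/- arXiv:2009.10937 — 8 statements merged into one kernel-verified Lean document; each statement's English description precedes it below -/
import Mathlib

section
/- Let F : ℂ → ℂ → ℂ be such that (z,w) ↦ F z w is analytic (jointly, as a function on ℂ × ℂ) on 𝔻 × 𝔻, F is Hermitian-symmetric on 𝔻 × 𝔻 (i.e. F z w = conj (F (conj w) (conj z)) for all z, w ∈ 𝔻), and F satisfies the PDE deriv (fun ζ => F ζ w) z = w² · deriv (fun ξ => F z ξ) w + w · F z w for all z, w ∈ 𝔻. Then F 0 0 is real and F z w = F 0 0 · (1 - z·w)⁻¹ for all z, w ∈ 𝔻. -/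
/-!
Conjugating the PDE through the Hermitian symmetry gives its mirror image
`∂_w F = z² ∂_z F + z F`. Together the two equations form a linear system for the partial
derivatives whose determinant `1 - z²w²` does not vanish on the bidisk; solving it gives
`(1 - z w) ∂_z F = w F` and `(1 - z w) ∂_w F = z F`. Hence `(1 - z w) F z w` has vanishing
partial derivatives, so it is the constant `F 0 0`, which is real by the symmetry at the origin.
-/

open ComplexConjugate Complex Topology Metric

lemma one_sub_mul_ne_zero_of_norm_lt_one {R : Type*} [NormedRing R] [NormOneClass R] {z w : R}
    (hz : ‖z‖ < 1) (hw : ‖w‖ < 1) : 1 - z * w ≠ 0 := by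
  intro h
  have hzw : ‖z * w‖ < 1 :=
    (norm_mul_le z w).trans_lt (mul_lt_one_of_nonneg_of_lt_one_left (norm_nonneg z) hz hw.le)
  rw [← sub_eq_zero.1 h, norm_one] at hzw
  exact hzw.false

lemma one_add_mul_ne_zero_of_norm_lt_one {R : Type*} [NormedRing R] [NormOneClass R] {z w : R}
    (hz : ‖z‖ < 1) (hw : ‖w‖ < 1) : 1 + z * w ≠ 0 := by
  simpa using one_sub_mul_ne_zero_of_norm_lt_one (z := -z) (by rwa [norm_neg]) hw

lemma IsOpen.is_const_of_hasDerivAt_zero {𝕜 G : Type*} [RCLike 𝕜] [NormedAddCommGroup G]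
    [NormedSpace 𝕜 G] {f : 𝕜 → G} {s : Set 𝕜} (hs : IsOpen s) (hs' : IsPreconnected s)
    (hf : ∀ x ∈ s, HasDerivAt f 0 x) {x y : 𝕜} (hx : x ∈ s) (hy : y ∈ s) : f x = f y :=
  hs.is_const_of_deriv_eq_zero hs' (fun a ha => (hf a ha).differentiableAt.differentiableWithinAt)
    (fun a ha => (hf a ha).deriv) hx hy

lemma deriv_eq_conj_deriv_of_eventuallyEq {f g : ℂ → ℂ} {x : ℂ}
    (h : g =ᶠ[𝓝 x] fun y => conj (f (conj y))) : deriv g x = conj (deriv f (conj x)) := by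
  rw [h.deriv_eq]
  exact congrFun (deriv_conj_conj (f := f)) x

lemma eventually_norm_lt_of_norm_lt {E : Type*} [SeminormedAddCommGroup E] {z : E} {r : ℝ}
    (hz : ‖z‖ < r) : ∀ᶠ y in 𝓝 z, ‖y‖ < r :=
  continuous_norm.continuousAt.eventually_lt continuousAt_const hz

def IsHermitianOnDisk (F : ℂ → ℂ → ℂ) : Prop :=
  ∀ z w : ℂ, ‖z‖ < 1 → ‖w‖ < 1 → F z w = conj (F (conj w) (conj z))

/-- The operator identity `∂* = M_z ∂ M_z` written for the kernel `F ν (conj ω)`. -/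
def SolvesKernelPDE (F : ℂ → ℂ → ℂ) : Prop :=
  ∀ z w : ℂ, ‖z‖ < 1 → ‖w‖ < 1 →
    deriv (fun ζ : ℂ => F ζ w) z = w ^ 2 * deriv (fun ξ : ℂ => F z ξ) w + w * F z w

namespace IsHermitianOnDisk

variable {F : ℂ → ℂ → ℂ} {z w : ℂ}

lemma deriv_fst_eq (hF : IsHermitianOnDisk F) (hz : ‖z‖ < 1) (hw : ‖w‖ < 1) :
    deriv (fun ζ => F ζ w) z = conj (deriv (fun ξ => F (conj w) ξ) (conj z)) :=
  deriv_eq_conj_deriv_of_eventuallyEq <|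
    (eventually_norm_lt_of_norm_lt hz).mono fun _ hζ => hF _ w hζ hw

lemma deriv_snd_eq (hF : IsHermitianOnDisk F) (hz : ‖z‖ < 1) (hw : ‖w‖ < 1) :
    deriv (fun ξ => F z ξ) w = conj (deriv (fun ζ => F ζ (conj z)) (conj w)) :=
  deriv_eq_conj_deriv_of_eventuallyEq <|
    (eventually_norm_lt_of_norm_lt hw).mono fun _ hξ => hF z _ hz hξ

lemma deriv_snd_eq_of_solvesKernelPDE (hF : IsHermitianOnDisk F) (hPDE : SolvesKernelPDE F)
    (hz : ‖z‖ < 1) (hw : ‖w‖ < 1) :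
    deriv (fun ξ => F z ξ) w = z ^ 2 * deriv (fun ζ => F ζ w) z + z * F z w := by
  have hz' : ‖conj z‖ < 1 := by rwa [norm_conj]
  have hw' : ‖conj w‖ < 1 := by rwa [norm_conj]
  rw [hF.deriv_snd_eq hz hw, hPDE _ _ hw' hz', hF.deriv_fst_eq hz hw, hF z w hz hw]
  simp only [map_add, map_mul, map_pow, conj_conj]

lemma first_order_system (hF : IsHermitianOnDisk F) (hPDE : SolvesKernelPDE F)
    (hz : ‖z‖ < 1) (hw : ‖w‖ < 1) :
    (1 - z * w) * deriv (fun ζ => F ζ w) z = w * F z w ∧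
      (1 - z * w) * deriv (fun ξ => F z ξ) w = z * F z w := by
  have hfst := hPDE z w hz hw
  have hsnd := hF.deriv_snd_eq_of_solvesKernelPDE hPDE hz hw
  have hw_eq : (1 - z * w) * deriv (fun ξ => F z ξ) w = z * F z w := by
    refine mul_left_cancel₀ (one_add_mul_ne_zero_of_norm_lt_one hz hw) ?_
    linear_combination hsnd + z ^ 2 * hfst
  exact ⟨by linear_combination (1 - z * w) * hfst + w ^ 2 * hw_eq, hw_eq⟩

lemma hasDerivAt_one_sub_mul_fst (hF : IsHermitianOnDisk F) (hPDE : SolvesKernelPDE F)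
    (hA : AnalyticOnNhd ℂ (fun p : ℂ × ℂ => F p.1 p.2) (ball 0 1 ×ˢ ball 0 1))
    (hz : ‖z‖ < 1) (hw : ‖w‖ < 1) : HasDerivAt (fun ζ => (1 - ζ * w) * F ζ w) 0 z := by
  have hD := (hA (z, w) ⟨mem_ball_zero_iff.2 hz, mem_ball_zero_iff.2 hw⟩).curry_left
  refine (((hasDerivAt_id' z).mul_const w).const_sub 1 |>.mul
    hD.differentiableAt.hasDerivAt).congr_deriv ?_
  linear_combination (hF.first_order_system hPDE hz hw).1

lemma hasDerivAt_one_sub_mul_snd (hF : IsHermitianOnDisk F) (hPDE : SolvesKernelPDE F)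
    (hA : AnalyticOnNhd ℂ (fun p : ℂ × ℂ => F p.1 p.2) (ball 0 1 ×ˢ ball 0 1))
    (hz : ‖z‖ < 1) (hw : ‖w‖ < 1) : HasDerivAt (fun ξ => (1 - z * ξ) * F z ξ) 0 w := by
  have hD := (hA (z, w) ⟨mem_ball_zero_iff.2 hz, mem_ball_zero_iff.2 hw⟩).curry_right
  refine (((hasDerivAt_id' w).const_mul z).const_sub 1 |>.mul
    hD.differentiableAt.hasDerivAt).congr_deriv ?_
  linear_combination (hF.first_order_system hPDE hz hw).2

lemma one_sub_mul_mul_eq (hF : IsHermitianOnDisk F) (hPDE : SolvesKernelPDE F)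
    (hA : AnalyticOnNhd ℂ (fun p : ℂ × ℂ => F p.1 p.2) (ball 0 1 ×ˢ ball 0 1))
    (hz : ‖z‖ < 1) (hw : ‖w‖ < 1) : (1 - z * w) * F z w = F 0 0 := by
  have hpre := (convex_ball (0 : ℂ) 1).isPreconnected
  have h0 : ‖(0 : ℂ)‖ < 1 := by simp
  calc (1 - z * w) * F z w = (1 - 0 * w) * F 0 w :=
        isOpen_ball.is_const_of_hasDerivAt_zero hpre
          (fun _ hζ => hF.hasDerivAt_one_sub_mul_fst hPDE hA (mem_ball_zero_iff.1 hζ) hw)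
          (mem_ball_zero_iff.2 hz) (mem_ball_zero_iff.2 h0)
    _ = (1 - 0 * 0) * F 0 0 :=
        isOpen_ball.is_const_of_hasDerivAt_zero hpre
          (fun _ hξ => hF.hasDerivAt_one_sub_mul_snd hPDE hA h0 (mem_ball_zero_iff.1 hξ))
          (mem_ball_zero_iff.2 hw) (mem_ball_zero_iff.2 h0)
    _ = F 0 0 := by ring

lemma im_apply_zero_zero (hF : IsHermitianOnDisk F) : (F 0 0).im = 0 :=
  conj_eq_iff_im.1 (by simpa using (hF 0 0 (by simp) (by simp)).symm)

end IsHermitianOnDisk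

theorem hardy_kernel_unique (F : ℂ → ℂ → ℂ)
    (hA : AnalyticOn ℂ (fun p : ℂ × ℂ => F p.1 p.2)
      (Metric.ball (0 : ℂ) 1 ×ˢ Metric.ball (0 : ℂ) 1))
    (hSym : ∀ z w : ℂ, ‖z‖ < 1 → ‖w‖ < 1 →
      F z w = conj (F (conj w) (conj z)))
    (hPDE : ∀ z w : ℂ, ‖z‖ < 1 → ‖w‖ < 1 →
      deriv (fun ζ : ℂ => F ζ w) z
        = w ^ 2 * deriv (fun ξ : ℂ => F z ξ) w + w * F z w) :
    (F 0 0).im = 0 ∧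
      ∀ z w : ℂ, ‖z‖ < 1 → ‖w‖ < 1 →
        F z w = F 0 0 * (1 - z * w)⁻¹ := by
  have hF : IsHermitianOnDisk F := hSym
  have hA' := (isOpen_ball.prod isOpen_ball).analyticOn_iff_analyticOnNhd.1 hA
  refine ⟨hF.im_apply_zero_zero, fun z w hz hw => ?_⟩
  rw [eq_mul_inv_iff_mul_eq₀ (one_sub_mul_ne_zero_of_norm_lt_one hz hw), mul_comm]
  exact hF.one_sub_mul_mul_eq hPDE hA' hz hw
end

section
/- Let c : ℕ → ℕ → ℂ satisfy: (i) c n m = conj (c m n) for all n, m; (ii) (n+1)·c (n+1) 0 = 0 for all n; (iii) (n+1)·c (n+1) 1 = c n 0 for all n; (iv) for all n and all m ≥ 2, (n+1)·c (n+1) m = m · c n (m-1). Then c n m = 0 whenever n ≠ m, and c n n = c 0 0 for all n. -/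
open ComplexConjugate Complex

theorem hardy_coeff_recursion (c : ℕ → ℕ → ℂ)
    (hSym : ∀ n m : ℕ, c n m = conj (c m n))
    (h0 : ∀ n : ℕ, ((n : ℂ) + 1) * c (n + 1) 0 = 0)
    (h1 : ∀ n : ℕ, ((n : ℂ) + 1) * c (n + 1) 1 = c n 0)
    (h2 : ∀ n m : ℕ, 2 ≤ m → ((n : ℂ) + 1) * c (n + 1) m = (m : ℂ) * c n (m - 1)) :
    (∀ n m : ℕ, n ≠ m → c n m = 0) ∧ (∀ n : ℕ, c n n = c 0 0) := by
  have key : ∀ n : ℕ, (∀ m : ℕ, n ≠ m → c n m = 0) ∧ c n n = c 0 0 := by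
    intro n
    induction n with
    | zero =>
      refine ⟨fun m hm => ?_, rfl⟩
      obtain ⟨k, rfl⟩ : ∃ k, m = k + 1 := ⟨m - 1, by omega⟩
      have hk : ((k : ℂ) + 1) ≠ 0 := Nat.cast_add_one_ne_zero k
      have hz : c (k + 1) 0 = 0 := by
        have := h0 k
        rcases mul_eq_zero.mp this with h | h
        · exact absurd h hk
        · exact h
      rw [hSym, hz, map_zero]
    | succ n ih =>
      have hne : ((n : ℂ) + 1) ≠ 0 := Nat.cast_add_one_ne_zero n
      constructor
      · intro m hm
        match m with
        | 0 =>
          have := h0 n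
          rcases mul_eq_zero.mp this with h | h
          · exact absurd h hne
          · exact h
        | 1 =>
          have hn0 : n ≠ 0 := by omega
          have : c n 0 = 0 := ih.1 0 hn0
          have h := h1 n
          rw [this] at h
          rcases mul_eq_zero.mp h with h | h
          · exact absurd h hne
          · exact h
        | (m + 2) =>
          have hmn : n ≠ m + 1 := by omega
          have : c n (m + 1) = 0 := ih.1 (m + 1) hmn
          have h := h2 n (m + 2) (by omega)
          rw [show m + 2 - 1 = m + 1 from rfl, this, mul_zero] at h
          rcases mul_eq_zero.mp h with h | h
          · exact absurd h hne
          · exact h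
      · match n, ih, hne with
        | 0, ih, hne =>
          have h := h1 0
          simpa using h
        | (k + 1), ih, hne =>
          have h := h2 (k + 1) (k + 2) (by omega)
          rw [show k + 2 - 1 = k + 1 from rfl, show k + 1 + 1 = k + 2 from rfl, ih.2] at h
          have hne2 : ((k + 1 : ℕ) : ℂ) + 1 ≠ 0 := hne
          exact mul_left_cancel₀ hne2 (by rw [h]; push_cast; ring)
  exact ⟨fun n m hnm => (key n).1 m hnm, fun n => (key n).2⟩
end

section
/- Let α be a real number with α ≥ 1. For all complex numbers z, w with |z| < 1 and |w| < 1, the function F(z,w) = (1 - z·w)^(-α) (complex power, principal branch) satisfies deriv (fun ζ => (1 - ζ·w)^(-α)) z = w² · deriv (fun ξ => (1 - z·ξ)^(-α)) w + α · w · (1 - z·w)^(-α). -/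
open ComplexConjugate Complex

/-! Both partial derivatives of `(1 - z w) ^ (-α)` are `α (1 - z w) ^ (-α - 1)` times `w`
resp. `z`, by the chain rule for the principal power, which applies because `1 - z w` lies in
the slit plane. Writing `(1 - z w) ^ (-α) = (1 - z w) ^ (-α - 1) (1 - z w)`, the identity
reduces to `w = w ^ 2 z + w (1 - z w)`. -/

namespace Complex

lemma one_sub_mul_mem_slitPlane {z w : ℂ} (hz : ‖z‖ < 1) (hw : ‖w‖ < 1) :
    1 - z * w ∈ slitPlane := by
  have hzw : ‖-(z * w)‖ < 1 := by
    rw [norm_neg, norm_mul]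
    exact mul_lt_one_of_nonneg_of_lt_one_left (norm_nonneg z) hz hw.le
  simpa only [← sub_eq_add_neg] using mem_slitPlane_of_norm_lt_one hzw

lemma cpow_eq_cpow_sub_one_mul {x : ℂ} (hx : x ≠ 0) (s : ℂ) : x ^ s = x ^ (s - 1) * x := by
  rw [cpow_sub _ _ hx, cpow_one, div_mul_cancel₀ _ hx]

lemma hasDerivAt_one_sub_mul_cpow {c x : ℂ} (s : ℂ) (h : 1 - c * x ∈ slitPlane) :
    HasDerivAt (fun ξ => (1 - c * ξ) ^ s) (s * (1 - c * x) ^ (s - 1) * -c) x := by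
  have hlin : HasDerivAt (fun ξ => 1 - c * ξ) (-c) x := by
    simpa using ((hasDerivAt_id x).const_mul c).const_sub 1
  exact hlin.cpow_const h

end Complex

theorem halpha_kernel_pde_general (α : ℝ) (z w : ℂ)
    (hz : ‖z‖ < 1) (hw : ‖w‖ < 1) :
    deriv (fun ζ : ℂ => (1 - ζ * w) ^ (-(α : ℂ))) z
      = w ^ 2 * deriv (fun ξ : ℂ => (1 - z * ξ) ^ (-(α : ℂ))) w
        + (α : ℂ) * w * (1 - z * w) ^ (-(α : ℂ)) := by
  have hmem := one_sub_mul_mem_slitPlane hz hw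
  have hζ := hasDerivAt_one_sub_mul_cpow (-(α : ℂ)) (mul_comm z w ▸ hmem)
  simp only [mul_comm w] at hζ
  rw [hζ.deriv, (hasDerivAt_one_sub_mul_cpow _ hmem).deriv,
    cpow_eq_cpow_sub_one_mul (slitPlane_ne_zero hmem) (-(α : ℂ))]
  ring

theorem halpha_kernel_pde (α : ℝ) (hα : 1 ≤ α) (z w : ℂ)
    (hz : ‖z‖ < 1) (hw : ‖w‖ < 1) :
    deriv (fun ζ : ℂ => (1 - ζ * w) ^ (-(α : ℂ))) z
      = w ^ 2 * deriv (fun ξ : ℂ => (1 - z * ξ) ^ (-(α : ℂ))) w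
        + (α : ℂ) * w * (1 - z * w) ^ (-(α : ℂ)) :=
  halpha_kernel_pde_general α z w hz hw
end

section
/- Let α be a real number with α ≥ 1 and let c : ℕ → ℕ → ℂ satisfy: (i) c n m = conj (c m n) for all n, m; (ii) (n+1)·c (n+1) 0 = 0 for all n; (iii) for all n and all m ≥ 1, (n+1)·c (n+1) m = (m - 1 + α) · c n (m-1). Then c n m = 0 whenever n ≠ m, and for every n, c n n = c 0 0 · (∏_{j=0}^{n-1} (α + j)) / n!. -/
open ComplexConjugate Complex Finset

theorem halpha_coeff_recursion (α : ℝ) (hα : 1 ≤ α) (c : ℕ → ℕ → ℂ)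
    (hSym : ∀ n m : ℕ, c n m = conj (c m n))
    (h0 : ∀ n : ℕ, ((n : ℂ) + 1) * c (n + 1) 0 = 0)
    (h1 : ∀ n m : ℕ, 1 ≤ m →
      ((n : ℂ) + 1) * c (n + 1) m = ((m : ℂ) - 1 + (α : ℂ)) * c n (m - 1)) :
    (∀ n m : ℕ, n ≠ m → c n m = 0) ∧
      (∀ n : ℕ, c n n = c 0 0 * (∏ j ∈ Finset.range n, ((α : ℂ) + (j : ℂ))) / (n.factorial : ℂ)) := by
  have hzero0 : ∀ m : ℕ, 1 ≤ m → c m 0 = 0 := by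
    intro m hm
    obtain ⟨k, rfl⟩ := Nat.exists_eq_add_of_le' hm
    have hk : ((k : ℂ) + 1) ≠ 0 := Nat.cast_add_one_ne_zero k
    have := h0 k
    exact (mul_eq_zero.mp this).resolve_left hk
  have key : ∀ n : ℕ, (∀ m : ℕ, n ≠ m → c n m = 0) ∧
      c n n = c 0 0 * (∏ j ∈ Finset.range n, ((α : ℂ) + (j : ℂ))) / (n.factorial : ℂ) := by
    intro n
    induction n with
    | zero =>
      constructor
      · intro m hm
        rw [hSym, hzero0 m (by omega)]
        simp
      · simp
    | succ n ih =>
      have hne : ((n : ℂ) + 1) ≠ 0 := Nat.cast_add_one_ne_zero n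
      have hrec : ∀ m : ℕ, c (n + 1) (m + 1) =
          (((m : ℂ)) + (α : ℂ)) * c n m / ((n : ℂ) + 1) := by
        intro m
        have := h1 n (m + 1) (by omega)
        simp only [Nat.add_sub_cancel] at this
        push_cast at this
        field_simp
        rw [mul_comm] at this
        rw [this]
        ring
      constructor
      · intro m hm
        cases m with
        | zero => exact hzero0 (n + 1) (by omega)
        | succ m =>
          rw [hrec m, ih.1 m (by omega)]
          simp
      · rw [hrec n, ih.2]
        rw [Finset.prod_range_succ, Nat.factorial_succ]
        have hfac : ((n.factorial : ℂ)) ≠ 0 := by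
          exact_mod_cast Nat.cast_ne_zero.mpr n.factorial_ne_zero
        push_cast
        field_simp
        ring
  exact ⟨fun n m => (key n).1 m, fun n => (key n).2⟩
end

section
/- Let c : ℕ → ℕ → ℂ satisfy: (i) c n m = conj (c m n) for all n, m; (ii) c 0 0 = 0 and c 1 0 = 0; (iii) (n+2)·c (n+2) 0 = 0 and (n+2)·c (n+2) 1 = 0 for all n; (iv) for all n and all m ≥ 2, (n+2)·c (n+2) m = (m−1) · c (n+1) (m−1). Then c n m = 0 whenever n ≠ m, and n · c n n = c 1 1 for all n ≥ 1. -/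
open ComplexConjugate Complex

theorem dirichlet_coeff_recursion (c : ℕ → ℕ → ℂ)
    (hSym : ∀ n m : ℕ, c n m = conj (c m n))
    (h00 : c 0 0 = 0) (h10 : c 1 0 = 0)
    (h0 : ∀ n : ℕ, ((n : ℂ) + 2) * c (n + 2) 0 = 0)
    (h1 : ∀ n : ℕ, ((n : ℂ) + 2) * c (n + 2) 1 = 0)
    (h2 : ∀ n m : ℕ, 2 ≤ m →
      ((n : ℂ) + 2) * c (n + 2) m = ((m : ℂ) - 1) * c (n + 1) (m - 1)) :
    (∀ n m : ℕ, n ≠ m → c n m = 0) ∧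
      (∀ n : ℕ, 1 ≤ n → (n : ℂ) * c n n = c 1 1) := by
  have hne : ∀ n : ℕ, ((n : ℂ) + 2) ≠ 0 := by
    intro n
    have h : ((n : ℂ) + 2) = ((n + 2 : ℕ) : ℂ) := by push_cast; ring
    rw [h]
    exact_mod_cast Nat.succ_ne_zero (n + 1)
  have hc0 : ∀ k : ℕ, c k 0 = 0 := by
    intro k
    match k with
    | 0 => exact h00
    | 1 => exact h10
    | (n + 2) => exact (mul_eq_zero.mp (h0 n)).resolve_left (hne n)
  have hc1 : ∀ k : ℕ, k ≠ 1 → c k 1 = 0 := by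
    intro k hk
    match k with
    | 0 => rw [hSym, h10]; simp
    | 1 => exact absurd rfl hk
    | (n + 2) => exact (mul_eq_zero.mp (h1 n)).resolve_left (hne n)
  have key : ∀ m : ℕ, (∀ k, k ≠ m → c k m = 0) ∧ (1 ≤ m → (m : ℂ) * c m m = c 1 1) := by
    intro m
    induction m with
    | zero => exact ⟨fun k _ => hc0 k, by omega⟩
    | succ m ih =>
      rcases Nat.lt_or_ge m 1 with h | hm1
      · have hm : m = 0 := by omega
        subst hm
        exact ⟨fun k hk => hc1 k hk, fun _ => by simp⟩
      · have hm2 : 2 ≤ m + 1 := by omega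
        constructor
        · intro k hk
          match k with
          | 0 => rw [hSym, hc0 (m + 1)]; simp
          | 1 => rw [hSym, hc1 (m + 1) (by omega)]; simp
          | (n + 2) =>
            have hrec := h2 n (m + 1) hm2
            simp only [Nat.add_sub_cancel] at hrec
            have hz : c (n + 1) m = 0 := ih.1 (n + 1) (by omega)
            rw [hz, mul_zero] at hrec
            exact (mul_eq_zero.mp hrec).resolve_left (hne n)
        · intro _
          obtain ⟨n, rfl⟩ : ∃ n, m = n + 1 := ⟨m - 1, by omega⟩
          have hrec := h2 n (n + 2) (by omega)
          have hIH := ih.2 (by omega)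
          push_cast at hrec hIH ⊢
          linear_combination hrec + hIH
  refine ⟨fun n m hnm => ?_, fun n hn => (key n).2 hn⟩
  rcases lt_or_gt_of_ne hnm with h | h
  · rw [hSym, (key n).1 m (by omega)]; simp
  · exact (key m).1 n hnm
end

section
/- Let F : ℂ → ℂ → ℂ be such that (z,w) ↦ F z w is analytic on all of ℂ × ℂ, F is Hermitian-symmetric (F z w = conj (F (conj w) (conj z)) for all z, w ∈ ℂ), and F satisfies the differential equation deriv (fun ξ => F z ξ) w = z · F z w for all z, w ∈ ℂ. Then F 0 0 is real and F z w = F 0 0 · exp(z·w) for all z, w ∈ ℂ. -/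
open ComplexConjugate Complex

/-!
Along each slice `w ↦ F z w` the equation is the linear ODE `f' = z f`, so `F z w = F z 0 · exp (z w)`.
Hermitian symmetry turns the boundary values `F z 0` into `conj (F 0 (conj z))`, and on the slice
`z = 0` the ODE says `F 0 ·` is constant; hence `F z 0 = conj (F 0 0) = F 0 0`.
-/

theorem AnalyticOn.differentiable_right {𝕜 E E' G : Type*} [NontriviallyNormedField 𝕜]
    [NormedAddCommGroup E] [NormedSpace 𝕜 E] [NormedAddCommGroup E'] [NormedSpace 𝕜 E']
    [NormedAddCommGroup G] [NormedSpace 𝕜 G] {f : E → E' → G}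
    (hf : AnalyticOn 𝕜 (fun p : E × E' => f p.1 p.2) Set.univ) (x : E) :
    Differentiable 𝕜 (f x) := by
  have hdiff : Differentiable 𝕜 (fun p : E × E' => f p.1 p.2) :=
    differentiableOn_univ.mp (analyticOn_univ.mp hf).differentiableOn
  exact hdiff.comp ((differentiable_const x).prodMk differentiable_id)

theorem Complex.eq_mul_exp_of_deriv_eq_const_mul {f : ℂ → ℂ} (c : ℂ) (hf : Differentiable ℂ f)
    (hderiv : ∀ w, deriv f w = c * f w) (w : ℂ) :
    f w = f 0 * exp (c * w) := by
  set g : ℂ → ℂ := fun ξ => f ξ * exp (-(c * ξ))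
  have hg : Differentiable ℂ g :=
    hf.mul (differentiable_exp.comp ((differentiable_const c).mul differentiable_id).neg)
  have hg' : ∀ ξ, deriv g ξ = 0 := by
    intro ξ
    have hfξ : HasDerivAt f (c * f ξ) ξ := hderiv ξ ▸ (hf ξ).hasDerivAt
    have hexp : HasDerivAt (fun ξ => exp (-(c * ξ))) (exp (-(c * ξ)) * -c) ξ :=
      (((hasDerivAt_id ξ).const_mul c).neg.congr_deriv (by simp)).cexp
    rw [(hfξ.fun_mul hexp).deriv]
    ring
  have hconst : f w * exp (-(c * w)) = f 0 := by
    simpa [g] using is_const_of_deriv_eq_zero hg hg' w 0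
  calc f w = f w * exp (-(c * w)) * exp (c * w) := by rw [mul_assoc, ← exp_add]; simp
    _ = f 0 * exp (c * w) := by rw [hconst]

theorem fock_kernel_unique (F : ℂ → ℂ → ℂ)
    (hA : AnalyticOn ℂ (fun p : ℂ × ℂ => F p.1 p.2) Set.univ)
    (hSym : ∀ z w : ℂ, F z w = conj (F (conj w) (conj z)))
    (hODE : ∀ z w : ℂ, deriv (fun ξ : ℂ => F z ξ) w = z * F z w) :
    (F 0 0).im = 0 ∧ ∀ z w : ℂ, F z w = F 0 0 * Complex.exp (z * w) := by
  have hslice : ∀ z w, F z w = F z 0 * exp (z * w) := fun z =>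
    eq_mul_exp_of_deriv_eq_const_mul z (hA.differentiable_right z) (hODE z)
  have hreal : conj (F 0 0) = F 0 0 := by simpa using (hSym 0 0).symm
  have hboundary : ∀ z, F z 0 = F 0 0 := fun z => by
    rw [hSym z 0, map_zero, hslice 0, zero_mul, exp_zero, mul_one, hreal]
  exact ⟨conj_eq_iff_im.mp hreal, fun z w => by rw [hslice z w, hboundary z]⟩
end

section
/- Let g : ℕ → ℕ → ℂ satisfy: (i) g n m = conj (g m n) for all n, m; (ii) for all n and all m ≥ 1, (n+1) · g (n+1) m = m · g n (m−1); (iii) g (n+1) 0 = 0 for all n. Then g n m = 0 whenever n ≠ m, and g n n = g 0 0 for all n. -/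
open ComplexConjugate Complex

theorem hardy_monomial_inner (g : ℕ → ℕ → ℂ)
    (hSym : ∀ n m : ℕ, g n m = conj (g m n))
    (hRec : ∀ n m : ℕ, 1 ≤ m → ((n : ℂ) + 1) * g (n + 1) m = (m : ℂ) * g n (m - 1))
    (hZero : ∀ n : ℕ, g (n + 1) 0 = 0) :
    (∀ n m : ℕ, n ≠ m → g n m = 0) ∧ (∀ n : ℕ, g n n = g 0 0) := by
  have key : ∀ k n : ℕ, g (n + 1 + k) k = 0 := by
    intro k
    induction k with
    | zero => intro n; exact hZero n
    | succ k ih =>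
      intro n
      have h := hRec (n + 1 + k) (k + 1) (Nat.le_add_left 1 k)
      simp only [Nat.add_sub_cancel] at h
      have hne : ((n + 1 + k : ℕ) : ℂ) + 1 ≠ 0 := Nat.cast_add_one_ne_zero _
      have : ((n + 1 + k : ℕ) : ℂ) + 1 = 0 ∨ g (n + 1 + k + 1) (k + 1) = 0 := by
        apply mul_eq_zero.mp
        rw [h, ih n]; ring
      rcases this with h0 | h0
      · exact absurd h0 hne
      · simpa [Nat.add_assoc] using h0
  have hgt : ∀ n m : ℕ, m < n → g n m = 0 := by
    intro n m hlt
    have hn : n = (n - m - 1) + 1 + m := by omega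
    rw [hn]; exact key m (n - m - 1)
  have hdiag : ∀ n : ℕ, g n n = g 0 0 := by
    intro n
    induction n with
    | zero => rfl
    | succ n ih =>
      have h := hRec n (n + 1) (Nat.le_add_left 1 n)
      simp only [Nat.add_sub_cancel] at h
      have hne : ((n : ℕ) : ℂ) + 1 ≠ 0 := Nat.cast_add_one_ne_zero n
      have : g (n + 1) (n + 1) = g n n := by
        push_cast at h
        exact mul_left_cancel₀ hne h
      rw [this, ih]
  refine ⟨fun n m hne => ?_, hdiag⟩
  rcases lt_trichotomy n m with h | h | h
  · rw [hSym n m, hgt m n h]; simp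
  · exact absurd h hne
  · exact hgt n m h
end

section
/- Let α : ℕ → ℝ with α n > 0 for all n ≥ 1, and let g : ℕ → ℕ → ℂ satisfy: (i) g n m = conj (g m n) for all n, m; (ii) for all n and all m ≥ 1, (α (n+1)) · g (n+1) m = m · g n (m−1); (iii) g (n+1) 0 = 0 for all n. Then g n m = 0 whenever n ≠ m, and for every n, g n n = (n! / (α 1 · α 2 ⋯ α n)) · g 0 0 (with the empty product equal to 1 for n = 0). -/
/-! The recurrence walks `g n m` down the diagonal `n - m = const` until it hits the first row
or column, which vanish (the first row by conjugate symmetry); along the main diagonal each step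
multiplies by `(n + 1) / α (n + 1)`. -/

open ComplexConjugate Complex Finset

section MonomialGram

variable {K : Type*} [Field K] {a : ℕ → K} {g : ℕ → ℕ → K}

theorem gram_eq_zero_of_ne (ha : ∀ n, a (n + 1) ≠ 0)
    (hRec : ∀ n m, a (n + 1) * g (n + 1) (m + 1) = ((m + 1 : ℕ) : K) * g n m)
    (hRow : ∀ m, g 0 (m + 1) = 0) (hCol : ∀ n, g (n + 1) 0 = 0) :
    ∀ n m, n ≠ m → g n m = 0 := by
  intro n
  induction n with
  | zero =>
    rintro (_ | m) hm
    · exact absurd rfl hm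
    · exact hRow m
  | succ n ih =>
    rintro (_ | m) hm
    · exact hCol n
    · have hStep := hRec n m
      rw [ih m (by omega), mul_zero] at hStep
      exact (mul_eq_zero.mp hStep).resolve_left (ha n)

theorem gram_diag_eq (ha : ∀ n, a (n + 1) ≠ 0)
    (hRec : ∀ n m, a (n + 1) * g (n + 1) (m + 1) = ((m + 1 : ℕ) : K) * g n m) (n : ℕ) :
    g n n = (n.factorial / ∏ j ∈ range n, a (j + 1)) * g 0 0 := by
  induction n with
  | zero => simp
  | succ n ih =>
    have hStep : g (n + 1) (n + 1) = (n + 1 : ℕ) / a (n + 1) * g n n := by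
      rw [div_mul_eq_mul_div, eq_div_iff (ha n), mul_comm, hRec]
    have hProd : ∏ j ∈ range n, a (j + 1) ≠ 0 := prod_ne_zero_iff.mpr fun j _ => ha j
    rw [hStep, ih, prod_range_succ, Nat.factorial_succ]
    field_simp [ha n]
    push_cast
    ring

end MonomialGram

theorem diagonal_operator_monomial_inner (α : ℕ → ℝ) (hα : ∀ n : ℕ, 1 ≤ n → 0 < α n)
    (g : ℕ → ℕ → ℂ)
    (hSym : ∀ n m : ℕ, g n m = conj (g m n))
    (hRec : ∀ n m : ℕ, 1 ≤ m →
      ((α (n + 1) : ℂ)) * g (n + 1) m = (m : ℂ) * g n (m - 1))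
    (hZero : ∀ n : ℕ, g (n + 1) 0 = 0) :
    (∀ n m : ℕ, n ≠ m → g n m = 0) ∧
      (∀ n : ℕ, g n n
        = ((n.factorial : ℂ) / ∏ j ∈ Finset.range n, ((α (j + 1) : ℝ) : ℂ)) * g 0 0) := by
  have hα_ne : ∀ n, (α (n + 1) : ℂ) ≠ 0 := fun n =>
    ofReal_ne_zero.mpr (hα (n + 1) (by omega)).ne'
  have hRec_succ : ∀ n m, (α (n + 1) : ℂ) * g (n + 1) (m + 1) = ((m + 1 : ℕ) : ℂ) * g n m :=
    fun n m => by simpa using hRec n (m + 1) (by omega)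
  have hRow : ∀ m, g 0 (m + 1) = 0 := fun m => by rw [hSym, hZero, map_zero]
  exact ⟨gram_eq_zero_of_ne (a := fun n => (α n : ℂ)) hα_ne hRec_succ hRow hZero,
    gram_diag_eq (a := fun n => (α n : ℂ)) hα_ne hRec_succ⟩
end
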